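/- Let F be a decomposable NNF over n Boolean variables. Define the SAT number SN(F, x) ∈ ℕ of F at an assignment x : Fin n → Bool recursively: SN of a literal (i, b) is 1 if x i = b and 0 otherwise; SN of an And node is the sum of the SNs of its children; SN of an Or node is the maximum of the SNs of its children. Define M(F) ∈ ℕ recursively: M of a literal is 1; M of an And node is the sum of the M-values of its children; M of an Or node is the maximum of the M-values of its children. Then max_{x : Fin n → Bool} SN(F, x) = M(F); that is, SN(F, x) ≤ M(F) for all x, and there exists x with SN(F, x) = M(F). -/

import Mathlib

/-- A negation normal form circuit (NNF) over `n` Boolean variables. -/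
inductive NNF (n : ℕ) where
  | lit : Fin n → Bool → NNF n
  | and : List (NNF n) → NNF n
  | or : List (NNF n) → NNF n

namespace NNF

variable {n : ℕ}

/-- The scope of an NNF: the set of variable indices appearing in its literals. -/
def scope : NNF n → Finset (Fin n)
  | .lit i _ => {i}
  | .and l => (l.attach.map fun c => c.1.scope).foldr (· ∪ ·) ∅
  | .or l => (l.attach.map fun c => c.1.scope).foldr (· ∪ ·) ∅
decreasing_by all_goals (simp_wf; have := List.sizeOf_lt_of_mem c.2; omega)

/-- An NNF is decomposable iff the children of every And node have pairwise
disjoint scopes. -/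
inductive Decomposable : NNF n → Prop
  | lit (i : Fin n) (b : Bool) : Decomposable (.lit i b)
  | and {l : List (NNF n)} :
      (∀ G ∈ l, Decomposable G) →
      l.Pairwise (fun G H => Disjoint G.scope H.scope) →
      Decomposable (.and l)
  | or {l : List (NNF n)} :
      (∀ G ∈ l, Decomposable G) → Decomposable (.or l)

/-- The SAT number `SN(F, x)` of an NNF at an assignment `x`: the SN of a
literal `(i, b)` is `1` if `x i = b` and `0` otherwise; the SN of an And node is
the sum of the SNs of its children; the SN of an Or node is the maximum of the
SNs of its children. -/
def SN : NNF n → (Fin n → Bool) → ℕ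
  | .lit i b, x => if x i = b then 1 else 0
  | .and l, x => (l.attach.map fun c => c.1.SN x).sum
  | .or l, x => (l.attach.map fun c => c.1.SN x).foldr max 0
decreasing_by all_goals (simp_wf; have := List.sizeOf_lt_of_mem c.2; omega)

/-- The bottom-up MAX-SAT pass `M` (summation in the max-sum semiring): `M` of
a literal is `1`, of an And node the sum of its children's values, of an Or
node the maximum of its children's values. -/
def maxSat : NNF n → ℕ
  | .lit _ _ => 1
  | .and l => (l.attach.map fun c => c.1.maxSat).sum
  | .or l => (l.attach.map fun c => c.1.maxSat).foldr max 0
decreasing_by all_goals (simp_wf; have := List.sizeOf_lt_of_mem c.2; omega)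

end NNF

/-! The bound `SN(F, x) ≤ M(F)` holds for every NNF, since sum and max are monotone. It is
attained on decomposable ones: an Or node attains it through a child realising the maximum, and
since `SN(G, x)` only depends on `x` on the scope of `G`, the maximizers of the children of an
And node, whose scopes are pairwise disjoint, glue into one assignment maximizing all of them. -/

theorem List.subset_foldr_union {α : Type*} [DecidableEq α] {L : List (Finset α)} {s : Finset α}
    (hs : s ∈ L) : s ⊆ L.foldr (· ∪ ·) ∅ := by
  induction L with
  | nil => simp at hs
  | cons t L ih =>
    rcases List.mem_cons.mp hs with rfl | hs
    · exact Finset.subset_union_left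
    · exact (ih hs).trans Finset.subset_union_right

theorem List.foldr_max_mem {α : Type*} [LinearOrder α] [OrderBot α] {L : List α}
    (hL : L ≠ []) : L.foldr max ⊥ ∈ L :=
  List.maximum_mem (List.foldr_max_of_ne_nil hL).symm

namespace NNF

variable {n : ℕ}

theorem scope_subset_scope_and {l : List (NNF n)} {G : NNF n} (hG : G ∈ l) :
    G.scope ⊆ (and l).scope := by
  rw [scope]
  exact List.subset_foldr_union
    (List.mem_map_of_mem (f := fun c => c.1.scope) (List.mem_attach l ⟨G, hG⟩))

theorem scope_subset_scope_or {l : List (NNF n)} {G : NNF n} (hG : G ∈ l) :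
    G.scope ⊆ (or l).scope := by
  rw [scope]
  exact List.subset_foldr_union
    (List.mem_map_of_mem (f := fun c => c.1.scope) (List.mem_attach l ⟨G, hG⟩))

theorem SN_le_SN_or {l : List (NNF n)} {G : NNF n} (hG : G ∈ l) (x : Fin n → Bool) :
    G.SN x ≤ (or l).SN x := by
  rw [SN]
  exact List.le_max_of_le
    (List.mem_map_of_mem (f := fun c => c.1.SN x) (List.mem_attach l ⟨G, hG⟩)) le_rfl

theorem exists_maxSat_or_eq {l : List (NNF n)} (hl : l ≠ []) :
    ∃ G ∈ l, (or l).maxSat = G.maxSat := by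
  have hne : (l.attach.map fun c => c.1.maxSat) ≠ [] := by simpa using hl
  obtain ⟨c, -, hc⟩ := List.mem_map.mp (List.foldr_max_mem hne)
  exact ⟨c.1, c.2, by rw [maxSat]; exact hc.symm⟩

theorem SN_le_maxSat : ∀ (F : NNF n) (x : Fin n → Bool), F.SN x ≤ F.maxSat
  | .lit i b, x => by rw [SN, maxSat]; split <;> simp
  | .and l, x => by
    rw [SN, maxSat]
    exact List.sum_le_sum fun c _ => SN_le_maxSat c.1 x
  | .or l, x => by
    rw [SN, maxSat]
    refine List.max_le_of_forall_le _ _ fun a ha => ?_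
    obtain ⟨c, -, rfl⟩ := List.mem_map.mp ha
    exact List.le_max_of_le (List.mem_map_of_mem (List.mem_attach l c)) (SN_le_maxSat c.1 x)
decreasing_by all_goals (simp_wf; have := List.sizeOf_lt_of_mem c.2; omega)

theorem SN_eq_of_eqOn : ∀ (F : NNF n) {x y : Fin n → Bool}, Set.EqOn x y F.scope →
    F.SN x = F.SN y
  | .lit i b, x, y, h => by
    rw [SN, SN, h (by simp [scope])]
  | .and l, x, y, h => by
    rw [SN, SN]
    congr 1
    exact List.map_congr_left fun c _ =>
      SN_eq_of_eqOn c.1 (h.mono (Finset.coe_subset.mpr (scope_subset_scope_and c.2)))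
  | .or l, x, y, h => by
    rw [SN, SN]
    congr 1
    exact List.map_congr_left fun c _ =>
      SN_eq_of_eqOn c.1 (h.mono (Finset.coe_subset.mpr (scope_subset_scope_or c.2)))
decreasing_by all_goals (simp_wf; have := List.sizeOf_lt_of_mem c.2; omega)

theorem exists_forall_SN_eq_maxSat {l : List (NNF n)}
    (hmax : ∀ G ∈ l, ∃ x, G.SN x = G.maxSat)
    (hdisj : l.Pairwise fun G H => Disjoint G.scope H.scope) :
    ∃ x, ∀ G ∈ l, G.SN x = G.maxSat := by
  induction l with
  | nil => exact ⟨fun _ => true, by simp⟩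
  | cons G l ih =>
    rw [List.pairwise_cons] at hdisj
    obtain ⟨xG, hxG⟩ := hmax G List.mem_cons_self
    obtain ⟨xl, hxl⟩ := ih (fun H hH => hmax H (List.mem_cons_of_mem G hH)) hdisj.2
    refine ⟨G.scope.piecewise xG xl, fun H hH => ?_⟩
    rcases List.mem_cons.mp hH with rfl | hH
    · rw [← hxG]
      exact SN_eq_of_eqOn H fun i hi => Finset.piecewise_eq_of_mem _ _ _ hi
    · rw [← hxl H hH]
      exact SN_eq_of_eqOn H fun i hi =>
        Finset.piecewise_eq_of_notMem _ _ _ (Finset.disjoint_right.mp (hdisj.1 H hH) hi)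

theorem Decomposable.exists_SN_eq_maxSat {F : NNF n} (hF : F.Decomposable) :
    ∃ x, F.SN x = F.maxSat := by
  induction hF with
  | lit i b => exact ⟨fun _ => b, by simp [SN, maxSat]⟩
  | and _ hdisj ih =>
    obtain ⟨x, hx⟩ := exists_forall_SN_eq_maxSat ih hdisj
    refine ⟨x, ?_⟩
    rw [SN, maxSat]
    exact congrArg List.sum (List.map_congr_left fun c _ => hx c.1 c.2)
  | @or l _ ih =>
    rcases eq_or_ne l [] with rfl | hl
    · exact ⟨fun _ => true, by simp [SN, maxSat]⟩
    obtain ⟨G, hG, hmax⟩ := exists_maxSat_or_eq hl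
    obtain ⟨x, hx⟩ := ih G hG
    refine ⟨x, (SN_le_maxSat _ x).antisymm ?_⟩
    calc (NNF.or l).maxSat = G.maxSat := hmax
      _ = G.SN x := hx.symm
      _ ≤ (NNF.or l).SN x := SN_le_SN_or hG x

end NNF

/-- Corollary 9: the MAX-SAT value of a decomposable NNF, i.e. the maximum of
its SAT number over all assignments, equals the linear-time bottom-up value
`M(F)`: `SN(F, x) ≤ M(F)` for all `x` and `SN(F, x) = M(F)` for some `x`. -/
theorem maxsat_decomposable_nnf
    {n : ℕ} (F : NNF n) (hdec : F.Decomposable) :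
    (∀ x : Fin n → Bool, F.SN x ≤ F.maxSat) ∧
      ∃ x : Fin n → Bool, F.SN x = F.maxSat :=
  ⟨F.SN_le_maxSat, hdec.exists_SN_eq_maxSat⟩
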